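/- arXiv:math/0610456 — 6 statements merged into one kernel-verified Lean document; each statement's English description precedes it below -/
import Mathlib

section
/- For all positive integers n and m, r_{n+m} ≤ 1 + r_{max(n,m)}. -/
/-- `G(n)` can be represented by assigning to each vertex a set of at most `k`
colors (natural numbers) so that `x_i` and `y_j` share a color iff `i ≤ j`. -/
def HalfRep (n k : ℕ) : Prop :=
  ∃ X Y : Fin n → Finset ℕ,
    (∀ i, (X i).card ≤ k) ∧ (∀ j, (Y j).card ≤ k) ∧
    (∀ i j, (X i ∩ Y j).Nonempty ↔ i ≤ j)

/-- `r n` is the least `k` such that `G(n)` admits such a representation. -/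
noncomputable def r (n : ℕ) : ℕ := sInf {k | HalfRep n k}

/-!
Place a representation of `G(n)` and one of `G(m)` side by side on disjoint palettes
(colors `2a + 1` for the first, `2a + 2` for the second) and add one fresh color `0`,
given to every `x_i` of the first block and every `y_j` of the second. Within a block
adjacency is inherited, a first-block `x` meets a second-block `y` through `0`, and a
second-block `x` never meets a first-block `y`. Both blocks are restrictions of an optimal
representation of `G(max n m)`.
-/

open Finset

namespace HalfRep

theorem self (n : ℕ) : HalfRep n n := by
  refine ⟨fun i => {(i : ℕ)}, fun j => range (j + 1),
    fun i => (card_singleton _).trans_le i.pos, fun j => (card_range _).trans_le j.isLt,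
    fun i j => ?_⟩
  rw [← coe_nonempty, coe_inter, coe_singleton, Set.singleton_inter_nonempty, mem_coe,
    mem_range, Nat.lt_succ_iff, Fin.le_def]

theorem castLE {n k m : ℕ} (h : HalfRep n k) (hmn : m ≤ n) : HalfRep m k := by
  obtain ⟨X, Y, hX, hY, hXY⟩ := h
  exact ⟨X ∘ Fin.castLE hmn, Y ∘ Fin.castLE hmn, fun _ => hX _, fun _ => hY _,
    fun i j => (hXY _ _).trans (Fin.castLE_le_castLE_iff hmn)⟩

theorem append {n m k : ℕ} (h₁ : HalfRep n k) (h₂ : HalfRep m k) :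
    HalfRep (n + m) (k + 1) := by
  obtain ⟨X₁, Y₁, hX₁, hY₁, hXY₁⟩ := h₁
  obtain ⟨X₂, Y₂, hX₂, hY₂, hXY₂⟩ := h₂
  let e₁ : ℕ ↪ ℕ := ⟨fun a => 2 * a + 1, fun a b h => by simpa using h⟩
  let e₂ : ℕ ↪ ℕ := ⟨fun a => 2 * a + 2, fun a b h => by simpa using h⟩
  have he₁ (a : ℕ) : e₁ a = 2 * a + 1 := rfl
  have he₂ (a : ℕ) : e₂ a = 2 * a + 2 := rfl
  have h0₁ (s : Finset ℕ) : 0 ∉ s.map e₁ := by simp [he₁]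
  have h0₂ (s : Finset ℕ) : 0 ∉ s.map e₂ := by simp [he₂]
  have hdisj (s t : Finset ℕ) : s.map e₂ ∩ t.map e₁ = ∅ := by
    ext x; simp only [mem_inter, mem_map, he₁, he₂, notMem_empty, iff_false]
    rintro ⟨⟨a, -, rfl⟩, b, -, h⟩; omega
  refine ⟨Fin.append (fun i => insert 0 ((X₁ i).map e₁)) (fun i => (X₂ i).map e₂),
    Fin.append (fun j => (Y₁ j).map e₁) (fun j => insert 0 ((Y₂ j).map e₂)),
    Fin.addCases (fun i => ?_) (fun i => ?_), Fin.addCases (fun j => ?_) (fun j => ?_),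
    Fin.addCases (fun i => Fin.addCases (fun j => ?_) (fun j => ?_))
      (fun i => Fin.addCases (fun j => ?_) (fun j => ?_))⟩
  · rw [Fin.append_left]
    exact (card_insert_le _ _).trans (by rw [card_map]; exact Nat.succ_le_succ (hX₁ i))
  · rw [Fin.append_right, card_map]; exact (hX₂ i).trans k.le_succ
  · rw [Fin.append_left, card_map]; exact (hY₁ j).trans k.le_succ
  · rw [Fin.append_right]
    exact (card_insert_le _ _).trans (by rw [card_map]; exact Nat.succ_le_succ (hY₂ j))
  · rw [Fin.append_left, Fin.append_left, insert_inter_of_notMem (h0₁ _), ← map_inter,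
      map_nonempty, hXY₁, (Fin.strictMono_castAdd m).le_iff_le]
  · rw [Fin.append_left, Fin.append_right]
    exact iff_of_true ⟨0, by simp⟩ (Fin.le_def.2 (by simp; omega))
  · rw [Fin.append_right, Fin.append_left, hdisj]
    exact iff_of_false (by simp) (by simp [Fin.le_def]; omega)
  · rw [Fin.append_right, Fin.append_right, inter_insert_of_notMem (h0₂ _), ← map_inter,
      map_nonempty, hXY₂, Fin.natAdd_le_natAdd_iff]

end HalfRep

theorem halfRep_r (n : ℕ) : HalfRep n (r n) :=
  Nat.sInf_mem (s := {k | HalfRep n k}) ⟨n, HalfRep.self n⟩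

theorem r_le_of_halfRep {n k : ℕ} (h : HalfRep n k) : r n ≤ k :=
  Nat.sInf_le h

theorem r_add_le_general (n m : ℕ) :
    r (n + m) ≤ 1 + r (max n m) := by
  have hmax := halfRep_r (max n m)
  rw [add_comm 1]
  exact r_le_of_halfRep ((hmax.castLE (le_max_left n m)).append (hmax.castLE (le_max_right n m)))

/-- For all positive integers `n, m`, `r (n+m) ≤ 1 + r (max n m)`. -/
theorem r_add_le (n m : ℕ) (hn : 1 ≤ n) (hm : 1 ≤ m) :
    r (n + m) ≤ 1 + r (max n m) :=
  r_add_le_general n m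
end

section
/- For every positive integer k, r_{(2k-1)!!} ≥ k, where (2k-1)!! = (2k-1)·(2k-3)···3·1. -/
open Finset

/-- The condition of `HalfRep` for `ℕ`-indexed families, of which only the indices below `m`
matter; this keeps the block arithmetic free of `Fin`. -/
def IsHalfGraphRep (m : ℕ) (X Y : ℕ → Finset ℕ) : Prop :=
  ∀ i < m, ∀ j < m, (X i ∩ Y j).Nonempty ↔ i ≤ j

theorem halfRep_iff {n k : ℕ} :
    HalfRep n k ↔ ∃ X Y : ℕ → Finset ℕ,
      (∀ i < n, #(X i) ≤ k) ∧ (∀ j < n, #(Y j) ≤ k) ∧ IsHalfGraphRep n X Y := by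
  constructor
  · rintro ⟨X, Y, hX, hY, hXY⟩
    refine ⟨fun i => if h : i < n then X ⟨i, h⟩ else ∅,
      fun j => if h : j < n then Y ⟨j, h⟩ else ∅, fun i hi => ?_, fun j hj => ?_,
      fun i hi j hj => ?_⟩
    · simpa [hi] using hX ⟨i, hi⟩
    · simpa [hj] using hY ⟨j, hj⟩
    · simpa [hi, hj] using hXY ⟨i, hi⟩ ⟨j, hj⟩
  · rintro ⟨X, Y, hX, hY, hXY⟩
    exact ⟨fun i => X i, fun j => Y j, fun i => hX i i.2, fun j => hY j j.2,
      fun i j => hXY i i.2 j j.2⟩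

theorem HalfRep.mono {n k k' : ℕ} (h : HalfRep n k) (hk : k ≤ k') : HalfRep n k' := by
  obtain ⟨X, Y, hX, hY, hXY⟩ := h
  exact ⟨X, Y, fun i => (hX i).trans hk, fun j => (hY j).trans hk, hXY⟩

theorem halfRep_self (n : ℕ) : HalfRep n n := by
  refine halfRep_iff.2 ⟨fun i => {i}, fun j => range (j + 1), fun i hi => ?_, fun j hj => ?_,
    fun i _ j _ => ?_⟩
  · simpa using Nat.one_le_of_lt hi
  · simpa using hj
  · rw [← coe_nonempty, coe_inter, coe_singleton, Set.singleton_inter_nonempty, mem_coe,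
      mem_range, Nat.lt_add_one_iff]

theorem not_halfRep_zero {n : ℕ} (hn : 0 < n) : ¬ HalfRep n 0 := by
  rintro ⟨X, Y, hX, -, hXY⟩
  obtain ⟨c, hc⟩ := (hXY ⟨0, hn⟩ ⟨0, hn⟩).2 le_rfl
  simp [card_eq_zero.1 (Nat.le_zero.1 (hX ⟨0, hn⟩))] at hc

theorem lt_r_of_not_halfRep {n k : ℕ} (h : ¬ HalfRep n k) : k < r n := by
  by_contra! hr
  have hmem : r n ∈ {k | HalfRep n k} := Nat.sInf_mem ⟨n, halfRep_self n⟩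
  exact h (hmem.mono hr)

def OccursOnlyBelow (X : ℕ → Finset ℕ) (m b c : ℕ) : Prop :=
  ∀ i < m, c ∈ X i → i < b

def OccursOnlyFrom (Y : ℕ → Finset ℕ) (m a c : ℕ) : Prop :=
  ∀ j < m, c ∈ Y j → a ≤ j

theorem card_le_card_of_lt_disjoint {ι α : Type*} [LinearOrder ι] {S : Finset ι}
    {F : ι → Finset α} {A : Finset α} (hdisj : ∀ a ∈ S, ∀ b ∈ S, a < b → Disjoint (F a) (F b))
    (hA : ∀ t ∈ S, ∃ c ∈ A, c ∈ F t) : #S ≤ #A := by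
  refine card_le_card_of_forall_subsingleton (fun t c => c ∈ F t) hA fun c _ a ha b hb => ?_
  rcases lt_trichotomy a b with hab | rfl | hab
  · exact absurd hb.2 (disjoint_left.1 (hdisj a ha.1 b hb.1 hab) ha.2)
  · rfl
  · exact absurd ha.2 (disjoint_left.1 (hdisj b hb.1 a ha.1 hab) hb.2)

namespace IsHalfGraphRep

variable {m k : ℕ} {X Y : ℕ → Finset ℕ}

theorem le_of_mem (hXY : IsHalfGraphRep m X Y) {i j c : ℕ} (hi : i < m) (hj : j < m)
    (hci : c ∈ X i) (hcj : c ∈ Y j) : i ≤ j :=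
  (hXY i hi j hj).1 ⟨c, mem_inter.2 ⟨hci, hcj⟩⟩

theorem halfRep_of_block (hXY : IsHalfGraphRep m X Y) {a n : ℕ} (han : a + n ≤ m)
    (hXk : ∀ i < m, #(X i) ≤ k + 1) (hYk : ∀ j < m, #(Y j) ≤ k + 1)
    (hXgood : ∀ i, a ≤ i → i < a + n → ∃ c ∈ X i, ¬ OccursOnlyBelow X m (a + n) c)
    (hYgood : ∀ j, a ≤ j → j < a + n → ∃ c ∈ Y j, ¬ OccursOnlyFrom Y m a c) :
    HalfRep n k := by
  classical
  refine halfRep_iff.2 ⟨fun s => (X (a + s)).filter (OccursOnlyBelow X m (a + n)),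
    fun s => (Y (a + s)).filter (OccursOnlyFrom Y m a), fun s hs => ?_, fun s hs => ?_,
    fun s hs u hu => ⟨?_, fun hsu => ?_⟩⟩
  · dsimp only
    obtain ⟨c, hc, hc'⟩ := hXgood (a + s) (by omega) (by omega)
    have := card_lt_card (filter_ssubset.2 ⟨c, hc, hc'⟩)
    have := hXk (a + s) (by omega)
    omega
  · dsimp only
    obtain ⟨c, hc, hc'⟩ := hYgood (a + s) (by omega) (by omega)
    have := card_lt_card (filter_ssubset.2 ⟨c, hc, hc'⟩)
    have := hYk (a + s) (by omega)
    omega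
  · rintro ⟨c, hc⟩
    simp only [mem_inter, mem_filter] at hc
    have := hXY.le_of_mem (by omega) (by omega) hc.1.1 hc.2.1
    omega
  -- a color shared by `x_{a+s}` and `y_{a+u}` occurs in `X` only up to `a + u` and in `Y`
  -- only from `a + s` on, so it survives in both
  · obtain ⟨c, hc⟩ := (hXY (a + s) (by omega) (a + u) (by omega)).2 (by omega)
    rw [mem_inter] at hc
    refine ⟨c, mem_inter.2 ⟨mem_filter.2 ⟨hc.1, fun i hi hci => ?_⟩,
      mem_filter.2 ⟨hc.2, fun j hj hcj => ?_⟩⟩⟩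
    · have := hXY.le_of_mem hi (by omega) hci hc.2
      omega
    · have := hXY.le_of_mem (by omega) hj hc.1 hcj
      omega

theorem card_le_of_occursOnlyBelow (hXY : IsHalfGraphRep m X Y) (hYk : ∀ j < m, #(Y j) ≤ k)
    {n : ℕ} {S : Finset ℕ}
    (hS : ∀ t ∈ S, ∃ i, t * n ≤ i ∧ i < m ∧ ∀ c ∈ X i, OccursOnlyBelow X m (t * n + n) c) :
    #S ≤ k := by
  rcases S.eq_empty_or_nonempty with rfl | ⟨t₀, ht₀⟩
  · simp
  have hm : 0 < m := by obtain ⟨i, -, hi, -⟩ := hS t₀ ht₀; omega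
  choose! w hwlo hwm hw using hS
  refine (card_le_card_of_lt_disjoint (F := fun t => X (w t)) (A := Y (m - 1))
    (fun a ha b hb hab => disjoint_left.2 fun c hca hcb => ?_) fun t ht => ?_).trans
    (hYk (m - 1) (by omega))
  · have := hw a ha c hca (w b) (hwm b hb) hcb
    have := hwlo b hb
    have : a * n + n ≤ b * n := by simpa [add_one_mul] using Nat.mul_le_mul_right n hab
    omega
  · obtain ⟨c, hc⟩ := (hXY (w t) (hwm t ht) (m - 1) (by omega)).2 (by have := hwm t ht; omega)
    exact ⟨c, (mem_inter.1 hc).2, (mem_inter.1 hc).1⟩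

theorem card_le_of_occursOnlyFrom (hXY : IsHalfGraphRep m X Y) (hXk : ∀ i < m, #(X i) ≤ k)
    {n : ℕ} {S : Finset ℕ}
    (hS : ∀ t ∈ S, ∃ j, j < t * n + n ∧ j < m ∧ ∀ c ∈ Y j, OccursOnlyFrom Y m (t * n) c) :
    #S ≤ k := by
  rcases S.eq_empty_or_nonempty with rfl | ⟨t₀, ht₀⟩
  · simp
  have hm : 0 < m := by obtain ⟨j, -, hj, -⟩ := hS t₀ ht₀; omega
  choose! w hwhi hwm hw using hS
  refine (card_le_card_of_lt_disjoint (F := fun t => Y (w t)) (A := X 0)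
    (fun a ha b hb hab => disjoint_left.2 fun c hca hcb => ?_) fun t ht => ?_).trans (hXk 0 hm)
  · have := hw b hb c hcb (w a) (hwm a ha) hca
    have := hwhi a ha
    have : a * n + n ≤ b * n := by simpa [add_one_mul] using Nat.mul_le_mul_right n hab
    omega
  · obtain ⟨c, hc⟩ := (hXY 0 hm (w t) (hwm t ht)).2 (Nat.zero_le _)
    exact ⟨c, (mem_inter.1 hc).1, (mem_inter.1 hc).2⟩

end IsHalfGraphRep

theorem halfRep_of_halfRep_mul {n k : ℕ} (h : HalfRep ((2 * k + 3) * n) (k + 1)) :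
    HalfRep n k := by
  classical
  obtain ⟨X, Y, hXk, hYk, hXY⟩ := halfRep_iff.1 h
  set m := (2 * k + 3) * n
  have hblock : ∀ t < 2 * k + 3, t * n + n ≤ m := fun t ht => by
    simpa [add_one_mul] using Nat.mul_le_mul_right n (Nat.succ_le_of_lt ht)
  by_contra hbad
  let SX := {t ∈ range (2 * k + 3) |
    ∃ i, t * n ≤ i ∧ i < t * n + n ∧ ∀ c ∈ X i, OccursOnlyBelow X m (t * n + n) c}
  let SY := {t ∈ range (2 * k + 3) |
    ∃ j, t * n ≤ j ∧ j < t * n + n ∧ ∀ c ∈ Y j, OccursOnlyFrom Y m (t * n) c}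
  have hcover : range (2 * k + 3) ⊆ SX ∪ SY := by
    intro t ht
    by_contra hnot
    simp only [SX, SY, mem_union, mem_filter, ht, true_and, not_or, not_exists, not_and,
      not_forall, exists_prop] at hnot
    exact hbad (hXY.halfRep_of_block (hblock t (mem_range.1 ht)) hXk hYk hnot.1 hnot.2)
  have hSX : #SX ≤ k + 1 := hXY.card_le_of_occursOnlyBelow hYk fun t ht => by
    obtain ⟨ht, i, hi, hi', hc⟩ := mem_filter.1 ht
    exact ⟨i, hi, by have := hblock t (mem_range.1 ht); omega, hc⟩
  have hSY : #SY ≤ k + 1 := hXY.card_le_of_occursOnlyFrom hXk fun t ht => by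
    obtain ⟨ht, j, -, hj, hc⟩ := mem_filter.1 ht
    exact ⟨j, hj, by have := hblock t (mem_range.1 ht); omega, hc⟩
  have := (card_le_card hcover).trans (card_union_le _ _)
  rw [card_range] at this
  omega

theorem not_halfRep_prod_range (k : ℕ) : ¬ HalfRep (∏ j ∈ range (k + 1), (2 * j + 1)) k := by
  induction k with
  | zero => simpa using not_halfRep_zero one_pos
  | succ k ih =>
    intro h
    rw [prod_range_succ, mul_comm, show 2 * (k + 1) + 1 = 2 * k + 3 by ring] at h
    exact ih (halfRep_of_halfRep_mul h)

/-- For every positive integer `k`, `r ((2k-1)!!) ≥ k`, where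
`(2k-1)!! = (2k-1)(2k-3)⋯3·1 = ∏_{j=0}^{k-1} (2j+1)`. -/
theorem r_doubleFactorial (k : ℕ) (hk : 1 ≤ k) :
    k ≤ r (∏ j ∈ Finset.range k, (2 * j + 1)) := by
  obtain ⟨k, rfl⟩ := Nat.exists_eq_add_of_le' hk
  exact lt_r_of_not_halfRep (not_halfRep_prod_range k)
end

section
/- For each fixed k, for all sufficiently large n, the edges of G(n) cannot be covered by complete bipartite subgraphs in such a way that each vertex belongs to at most k of them. -/
open Finset

theorem Finset.exists_card_le_mul_card_of_subset_biUnion {α β : Type*} [DecidableEq β]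
    {s : Finset β} {t : Finset α} {B : α → Finset β} (hs : s.Nonempty) (h : s ⊆ t.biUnion B) :
    ∃ c ∈ t, #s ≤ #t * #(B c) := by
  obtain ⟨x, hx⟩ := hs
  have ht : t.Nonempty := by
    obtain ⟨c, hc, -⟩ := mem_biUnion.1 (h hx)
    exact ⟨c, hc⟩
  obtain ⟨c, hc, hmax⟩ := t.exists_max_image (fun c => #(B c)) ht
  refine ⟨c, hc, ?_⟩
  calc #s ≤ #(t.biUnion B) := card_le_card h
    _ ≤ ∑ c' ∈ t, #(B c') := card_biUnion_le
    _ ≤ #t * #(B c) := sum_le_card_nsmul _ _ _ hmax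

/-- `halfRepBound k b = k + k² + ⋯ + kᵇ`. -/
def halfRepBound (k : ℕ) : ℕ → ℕ
  | 0 => 0
  | b + 1 => k * (halfRepBound k b + 1)

section HalfRepresentation

variable {ι α : Type*} [LinearOrder ι] [DecidableEq α]

def IsHalfRep (s : Finset ι) (X Y : ι → Finset α) : Prop :=
  ∀ i ∈ s, ∀ j ∈ s, (X i ∩ Y j).Nonempty ↔ i ≤ j

variable {s t : Finset ι} {X Y : ι → Finset α}

theorem IsHalfRep.mono (h : IsHalfRep s X Y) (hts : t ⊆ s) : IsHalfRep t X Y :=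
  fun i hi j hj => h i (hts hi) j (hts hj)

/-- A color `c` shared by all `y_j`, `j ∈ s`, lies in `X j₀ ∩ Y j₀` for the least `j₀ ∈ s`,
hence in no `X i` with `j₀ < i`: it can be deleted once `j₀` is dropped. -/
theorem IsHalfRep.erase_color (h : IsHalfRep s X Y) (hs : s.Nonempty) {c : α}
    (hc : ∀ j ∈ s, c ∈ Y j) : IsHalfRep (s.erase (s.min' hs)) X (fun j => (Y j).erase c) := by
  intro i hi j hj
  obtain ⟨hi₀, hi⟩ := mem_erase.1 hi
  have hcX : c ∉ X i := fun hcX =>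
    hi₀ <| le_antisymm
      ((h i hi _ (s.min'_mem hs)).1 ⟨c, mem_inter.2 ⟨hcX, hc _ (s.min'_mem hs)⟩⟩)
      (s.min'_le i hi)
  rw [← erase_inter_comm, erase_eq_of_notMem hcX]
  exact h i hi j (mem_of_mem_erase hj)

theorem IsHalfRep.card_le {k b : ℕ} (h : IsHalfRep s X Y) (hX : ∀ i ∈ s, #(X i) ≤ k)
    (hY : ∀ j ∈ s, #(Y j) ≤ b) : #s ≤ halfRepBound k b := by
  induction b generalizing s Y with
  | zero =>
    rw [halfRepBound, Nat.le_zero, card_eq_zero, ← not_nonempty_iff_eq_empty]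
    rintro ⟨i, hi⟩
    have hYi : Y i = ∅ := card_eq_zero.1 (Nat.le_zero.1 (hY i hi))
    simpa [hYi] using (h i hi i hi).2 le_rfl
  | succ b ih =>
    rcases s.eq_empty_or_nonempty with rfl | hs
    · simp
    have hcover : s ⊆ (X (s.min' hs)).biUnion (fun c => {j ∈ s | c ∈ Y j}) := by
      intro j hj
      obtain ⟨c, hc⟩ := (h _ (s.min'_mem hs) j hj).2 (s.min'_le j hj)
      exact mem_biUnion.2 ⟨c, (mem_inter.1 hc).1, mem_filter.2 ⟨hj, (mem_inter.1 hc).2⟩⟩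
    obtain ⟨c, -, hc⟩ := exists_card_le_mul_card_of_subset_biUnion hs hcover
    set t := {j ∈ s | c ∈ Y j}
    have hct : ∀ j ∈ t, c ∈ Y j := fun j hj => (mem_filter.1 hj).2
    have hts : t ⊆ s := filter_subset _ _
    have hcolor : #t ≤ halfRepBound k b + 1 := by
      rcases t.eq_empty_or_nonempty with ht | ht
      · simp [ht]
      have hrest := ih ((h.mono hts).erase_color ht hct)
        (fun i hi => hX i (hts (mem_of_mem_erase hi)))
        (fun j hj => by
          have hj := mem_of_mem_erase hj
          rw [card_erase_of_mem (hct j hj)]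
          have := hY j (hts hj)
          omega)
      rw [card_erase_of_mem (t.min'_mem ht)] at hrest
      omega
    calc #s ≤ #(X (s.min' hs)) * #t := hc
      _ ≤ k * (halfRepBound k b + 1) := Nat.mul_le_mul (hX _ (s.min'_mem hs)) hcolor

end HalfRepresentation

/-- For each fixed `k`, for all sufficiently large `n`, the edges of `G(n)`
cannot be covered by complete bipartite subgraphs so that each vertex belongs
to at most `k` of them; equivalently, `G(n)` has no representation assigning
at most `k` colors per vertex with `x_i, y_j` sharing a color iff `i ≤ j`. -/
theorem no_bounded_cover (k : ℕ) : ∃ N : ℕ, ∀ n, N ≤ n → ¬ HalfRep n k := by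
  refine ⟨halfRepBound k k + 1, fun n hn ⟨X, Y, hX, hY, hXY⟩ => ?_⟩
  have hrep : IsHalfRep (univ : Finset (Fin n)) X Y := fun i _ j _ => hXY i j
  have := hrep.card_le (fun i _ => hX i) (fun j _ => hY j)
  rw [card_univ, Fintype.card_fin] at this
  omega
end

section
/- Suppose in a representation of G((2k+1)n) by colors (each vertex gets a set of colors, with x_p and y_q sharing a color iff p ≤ q), block G_i has a vertex x_p all of whose colors appear among the y-vertices of G_i, and block G_{i+1} has a vertex y_q all of whose colors appear among the x-vertices of G_{i+1}. Then a contradiction arises: some nonedge of G((2k+1)n) would be represented. Hence no such pair of distinguished vertices on consecutive blocks (x-side then y-side) can exist. -/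
/-!
Since `p < q`, the vertices `x_p` and `y_q` share a colour `c`. By distinguishedness `c` also sits at
some `y_s` in `G_i` and at some `x_t` in `G_{i+1}`, so the nonedge `x_t y_s` (where `s < t`) would be
represented.
-/

def IsColorRepresentation {ι α : Type*} [LE ι] [DecidableEq α] (X Y : ι → Finset α) : Prop :=
  ∀ p q, (X p ∩ Y q).Nonempty ↔ p ≤ q

namespace IsColorRepresentation

variable {ι α : Type*} [LE ι] [DecidableEq α] {X Y : ι → Finset α}

theorem exists_mem_mem_of_le (hrep : IsColorRepresentation X Y) {p q : ι} (h : p ≤ q) :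
    ∃ c, c ∈ X p ∧ c ∈ Y q := by
  obtain ⟨c, hc⟩ := (hrep p q).2 h
  exact ⟨c, Finset.mem_inter.1 hc⟩

theorem le_of_mem_of_mem (hrep : IsColorRepresentation X Y) {c : α} {t s : ι}
    (ht : c ∈ X t) (hs : c ∈ Y s) : t ≤ s :=
  (hrep t s).1 ⟨c, Finset.mem_inter.2 ⟨ht, hs⟩⟩

end IsColorRepresentation

theorem no_consecutive_distinguished_general (n N : ℕ)
    (X Y : Fin N → Finset ℕ)
    (hrep : ∀ p q : Fin N, ((X p) ∩ (Y q)).Nonempty ↔ p ≤ q)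
    (i : ℕ)
    (p q : Fin N)
    (hp : i * n ≤ (p : ℕ) ∧ (p : ℕ) < (i + 1) * n)
    (hq : (i + 1) * n ≤ (q : ℕ) ∧ (q : ℕ) < (i + 2) * n)
    (hpdist : ∀ c ∈ X p, ∃ s : Fin N,
      i * n ≤ (s : ℕ) ∧ (s : ℕ) < (i + 1) * n ∧ c ∈ Y s)
    (hqdist : ∀ c ∈ Y q, ∃ s : Fin N,
      (i + 1) * n ≤ (s : ℕ) ∧ (s : ℕ) < (i + 2) * n ∧ c ∈ X s) :
    False := by
  have hrep : IsColorRepresentation X Y := hrep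
  obtain ⟨c, hcp, hcq⟩ := hrep.exists_mem_mem_of_le (show p ≤ q by omega)
  obtain ⟨s, -, hs, hcs⟩ := hpdist c hcp
  obtain ⟨t, ht, -, hct⟩ := hqdist c hcq
  have hts : t ≤ s := hrep.le_of_mem_of_mem hct hcs
  omega

/-- Assertion 1: In a coloring representing `G((2k+1)n)` (vertices get finite
sets of colors, `x_p` and `y_q` share a color iff `p ≤ q`), it is impossible
that block `G_i` has a distinguished vertex `x_p` (all its colors appear at
`y`-vertices of block `G_i`) and block `G_{i+1}` has a distinguished vertex
`y_q` (all its colors appear at `x`-vertices of block `G_{i+1}`).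
Blocks are indexed `0,…,2k`, block `i` consisting of indices in `[i·n, (i+1)·n)`. -/
theorem no_consecutive_distinguished (n k N : ℕ) (hn : 1 ≤ n)
    (hN : N = (2 * k + 1) * n)
    (X Y : Fin N → Finset ℕ)
    (hrep : ∀ p q : Fin N, ((X p) ∩ (Y q)).Nonempty ↔ p ≤ q)
    (i : ℕ) (hi : i + 1 < 2 * k + 1)
    (p q : Fin N)
    (hp : i * n ≤ (p : ℕ) ∧ (p : ℕ) < (i + 1) * n)
    (hq : (i + 1) * n ≤ (q : ℕ) ∧ (q : ℕ) < (i + 2) * n)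
    (hpdist : ∀ c ∈ X p, ∃ s : Fin N,
      i * n ≤ (s : ℕ) ∧ (s : ℕ) < (i + 1) * n ∧ c ∈ Y s)
    (hqdist : ∀ c ∈ Y q, ∃ s : Fin N,
      (i + 1) * n ≤ (s : ℕ) ∧ (s : ℕ) < (i + 2) * n ∧ c ∈ X s) :
    False :=
  no_consecutive_distinguished_general n N X Y hrep i p q hp hq hpdist hqdist
end

section
/- In any coloring representing G((2k+1)n) (x_p and y_q share a color iff p ≤ q, at most k colors per vertex), it is impossible that k+1 consecutive blocks G_i, G_{i+1}, …, G_{i+k} each contain a distinguished vertex on the y-side, each distinguished vertex having exactly k colors. -/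
/-! The vertex `x_{d_0}` lies to the left of every distinguished vertex `y_{d_j}`, so it shares
some color `c_j` with each of them. These `k + 1` colors are distinct: if `c_a = c_b` with
`a < b`, then `c_b` also appears at some `x_s` in block `i + b`, so `x_s` would share a color
with `y_{d_a}` although `s > d_a`. Hence `x_{d_0}` carries `k + 1` colors, one too many. -/

theorem card_le_card_of_colors_reappear_right {ι α κ : Type*} [Preorder ι] [DecidableEq α]
    [LinearOrder κ] [Fintype κ] {X Y : ι → Finset α}
    (hrep : ∀ p q, (X p ∩ Y q).Nonempty ↔ p ≤ q) (d : κ → ι) {p : ι} (hp : ∀ j, p ≤ d j)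
    (hright : ∀ a b, a < b → ∀ c ∈ Y (d b), ∃ s, d a < s ∧ c ∈ X s) :
    Fintype.card κ ≤ (X p).card := by
  choose c hc using fun j => (hrep p (d j)).2 (hp j)
  have hcX : ∀ j, c j ∈ X p := fun j => (Finset.mem_inter.1 (hc j)).1
  have hcY : ∀ j, c j ∈ Y (d j) := fun j => (Finset.mem_inter.1 (hc j)).2
  have hinj : Function.Injective c := by
    refine Function.Injective.of_lt_imp_ne fun a b hab hcab => ?_
    obtain ⟨s, hlt, hs⟩ := hright a b hab (c b) (hcY b)
    have hle : s ≤ d a := (hrep s (d a)).1 ⟨c a, Finset.mem_inter.2 ⟨hcab ▸ hs, hcY a⟩⟩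
    exact (hlt.trans_le hle).false
  simpa using Finset.card_le_card_of_injOn c (s := Finset.univ) (fun j _ => hcX j)
    hinj.injOn

theorem lt_of_lt_block_of_block_le {n a b x y : ℕ} (hab : a < b) (hx : x < (a + 1) * n)
    (hy : b * n ≤ y) : x < y :=
  calc x < (a + 1) * n := hx
    _ ≤ b * n := Nat.mul_le_mul_right n hab
    _ ≤ y := hy

theorem no_k_plus_one_y_distinguished_general (n k N : ℕ)
    (X Y : Fin N → Finset ℕ)
    (hX : ∀ p, (X p).card ≤ k)
    (hrep : ∀ p q : Fin N, ((X p) ∩ (Y q)).Nonempty ↔ p ≤ q)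
    (i : ℕ)
    (d : ℕ → Fin N)
    (hd : ∀ j ≤ k, (i + j) * n ≤ (d j : ℕ) ∧ (d j : ℕ) < (i + j + 1) * n)
    (hdist : ∀ j ≤ k, ∀ c ∈ Y (d j), ∃ s : Fin N,
      (i + j) * n ≤ (s : ℕ) ∧ (s : ℕ) < (i + j + 1) * n ∧ c ∈ X s) :
    False := by
  have hblock : ∀ a b : Fin (k + 1), a < b → ∀ s : Fin N,
      (i + b) * n ≤ (s : ℕ) → d a < s := fun a b hab s hs =>
    Fin.lt_def.2 <| lt_of_lt_block_of_block_le (Nat.add_lt_add_left hab i)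
      (hd a (Nat.lt_succ_iff.1 a.2)).2 hs
  have hp : ∀ j : Fin (k + 1), d 0 ≤ d j := by
    intro j
    rcases (Nat.zero_le (j : ℕ)).eq_or_lt with hj | hj
    · rw [← hj]
    · exact (hblock 0 j (Fin.lt_def.2 hj) (d j) (hd j (Nat.lt_succ_iff.1 j.2)).1).le
  have hright : ∀ a b : Fin (k + 1), a < b → ∀ c ∈ Y (d b), ∃ s, d a < s ∧ c ∈ X s := by
    intro a b hab c hc
    obtain ⟨s, hs, -, hcs⟩ := hdist b (Nat.lt_succ_iff.1 b.2) c hc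
    exact ⟨s, hblock a b hab s hs, hcs⟩
  have hcard := card_le_card_of_colors_reappear_right hrep (fun j : Fin (k + 1) => d j) hp hright
  simp only [Fintype.card_fin] at hcard
  exact absurd (hcard.trans (hX (d 0))) (Nat.not_succ_le_self k)

/-- Assertion 2: In any coloring representing `G((2k+1)n)` (`x_p` and `y_q`
share a color iff `p ≤ q`, at most `k` colors per vertex), it is impossible
that `k+1` consecutive blocks `G_i, …, G_{i+k}` each contain a distinguished
vertex on the `y`-side, i.e. a vertex `y_d` with exactly `k` colors all of
which also appear at `x`-vertices of the same block.
Blocks are indexed `0,…,2k`, block `j` consisting of indices in `[j·n, (j+1)·n)`. -/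
theorem no_k_plus_one_y_distinguished (n k N : ℕ) (hn : 1 ≤ n)
    (hN : N = (2 * k + 1) * n)
    (X Y : Fin N → Finset ℕ)
    (hX : ∀ p, (X p).card ≤ k) (hY : ∀ q, (Y q).card ≤ k)
    (hrep : ∀ p q : Fin N, ((X p) ∩ (Y q)).Nonempty ↔ p ≤ q)
    (i : ℕ) (hi : i + k < 2 * k + 1)
    (d : ℕ → Fin N)
    (hd : ∀ j ≤ k, (i + j) * n ≤ (d j : ℕ) ∧ (d j : ℕ) < (i + j + 1) * n)
    (hcard : ∀ j ≤ k, (Y (d j)).card = k)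
    (hdist : ∀ j ≤ k, ∀ c ∈ Y (d j), ∃ s : Fin N,
      (i + j) * n ≤ (s : ℕ) ∧ (s : ℕ) < (i + j + 1) * n ∧ c ∈ X s) :
    False :=
  no_k_plus_one_y_distinguished_general n k N X Y hX hrep i d hd hdist
end

section
/- There exist constants c₁, c₂ > 0 such that: the number Q_n of triangle-free graphs on a fixed set of 2n labeled vertices containing all subgraphs of K_{n,n} satisfies log Q_n ≥ c₁ n², while the number of monotone Boolean formulas on n variables with size at most s is at most 2^(c₂ s log n) for n ≥ 2; consequently, the proportion of n-variable monotone quadratic Boolean functions expressible by formulas of size at most c·n²/log n (for suitable c > 0) tends to 0 as n → ∞. -/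
/-- Monotone Boolean formulas over variables of type `V`. -/
inductive MFormula (V : Type) where
  | var : V → MFormula V
  | and : MFormula V → MFormula V → MFormula V
  | or  : MFormula V → MFormula V → MFormula V

namespace MFormula

/-- Evaluation of a monotone formula under an assignment. -/
def eval {V : Type} (a : V → Bool) : MFormula V → Bool
  | var v => a v
  | and f g => f.eval a && g.eval a
  | or f g => f.eval a || g.eval a

/-- Number of occurrences of the variable `v` in a formula. -/
def occ {V : Type} [DecidableEq V] (v : V) : MFormula V → ℕ
  | var w => if w = v then 1 else 0
  | and f g => f.occ v + g.occ v
  | or f g => f.occ v + g.occ v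

end MFormula

/-- The size of a formula: the number of nodes of its parse tree. -/
def MFormula.size {V : Type} : MFormula V → ℕ
  | .var _ => 1
  | .and f g => f.size + g.size + 1
  | .or f g => f.size + g.size + 1

/-- `Q n`: the number of triangle-free graphs on a fixed set of `2n`
labeled vertices (these contain all subgraphs of `K_{n,n}`). -/
noncomputable def Q (n : ℕ) : ℕ :=
  Nat.card {G : SimpleGraph (Fin n ⊕ Fin n) | G.CliqueFree 3}


/-!
A formula of size at most `s` is determined by its Polish-notation word, padded to length `s`
over the alphabet of variables, the two connectives and a blank, so there are at most
`(m + 3) ^ s` of them on `m` variables. A formula computing the quadratic function of a graph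
determines the graph (evaluate it at the indicator of `{v, w}`), so at most
`(2n + 3) ^ s ≤ 2 ^ (3 s log n)` graphs on `2n` vertices have formulas of size `s`, while the
`2 ^ (n²)` subgraphs of `K_{n,n}` are all triangle-free. For `s = c n² / log n` with `c < 1/3`
the proportion is therefore at most `2 ^ ((3c - 1) n²)`.
-/

open Filter Topology

namespace MFormula

variable {V : Type}

/-- Polish notation, with `.inr true` standing for `∧` and `.inr false` for `∨`. -/
def toWord : MFormula V → List (V ⊕ Bool)
  | .var v => [.inl v]
  | .and f g => .inr true :: (f.toWord ++ g.toWord)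
  | .or f g => .inr false :: (f.toWord ++ g.toWord)

theorem length_toWord (φ : MFormula V) : φ.toWord.length = φ.size := by
  induction φ <;> simp [toWord, size, *]

theorem toWord_append_inj :
    ∀ {φ ψ : MFormula V} {l l' : List (V ⊕ Bool)},
      φ.toWord ++ l = ψ.toWord ++ l' → φ = ψ ∧ l = l'
  | .var v, .var w, _, _, h => by simp_all [toWord]
  | .and f g, .and f' g', _, _, h | .or f g, .or f' g', _, _, h => by
    simp only [toWord, List.cons_append, List.cons.injEq, List.append_assoc, true_and] at h
    obtain ⟨rfl, hg⟩ := toWord_append_inj h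
    obtain ⟨rfl, rfl⟩ := toWord_append_inj hg
    exact ⟨rfl, rfl⟩
  | .var _, .and _ _, _, _, h | .var _, .or _ _, _, _, h | .and _ _, .var _, _, _, h
  | .and _ _, .or _ _, _, _, h | .or _ _, .var _, _, _, h | .or _ _, .and _ _, _, _, h => by
    simp [toWord] at h

theorem toWord_injective : Function.Injective (toWord (V := V)) := fun φ ψ h =>
  (toWord_append_inj (l := []) (l' := []) (by rw [h])).1

def paddedWord (s : ℕ) (φ : MFormula V) : Fin s → Option (V ⊕ Bool) :=
  fun i => φ.toWord[i.1]?

theorem injOn_paddedWord (s : ℕ) :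
    Set.InjOn (paddedWord s) {φ : MFormula V | φ.size ≤ s} := by
  intro φ hφ ψ hψ h
  refine toWord_injective (List.ext_getElem? fun i => ?_)
  by_cases hi : i < s
  · exact congrFun h ⟨i, hi⟩
  · have hφi : φ.toWord.length ≤ i := by rw [length_toWord]; exact hφ.trans (not_lt.1 hi)
    have hψi : ψ.toWord.length ≤ i := by rw [length_toWord]; exact hψ.trans (not_lt.1 hi)
    rw [List.getElem?_eq_none hφi, List.getElem?_eq_none hψi]

instance [Finite V] (s : ℕ) : Finite {φ : MFormula V | φ.size ≤ s} :=
  Finite.of_injective _ (injOn_paddedWord s).injective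

theorem card_size_le (V : Type) [Fintype V] (s : ℕ) :
    Nat.card {φ : MFormula V | φ.size ≤ s} ≤ (Fintype.card V + 3) ^ s :=
  calc Nat.card {φ : MFormula V | φ.size ≤ s}
      ≤ Nat.card (Fin s → Option (V ⊕ Bool)) :=
        Nat.card_le_card_of_injective _ (injOn_paddedWord s).injective
    _ = (Fintype.card V + 3) ^ s := by simp [Nat.card_eq_fintype_card]

/-- `φ` computes the monotone quadratic function whose terms are the edges of `G`. -/
def Represents (φ : MFormula V) (G : SimpleGraph V) : Prop :=
  ∀ a : V → Bool, φ.eval a = true ↔ ∃ v w, G.Adj v w ∧ a v = true ∧ a w = true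

theorem Represents.adj_iff [DecidableEq V] {φ : MFormula V} {G : SimpleGraph V}
    (h : φ.Represents G) (v w : V) :
    G.Adj v w ↔ φ.eval (fun u => decide (u = v ∨ u = w)) = true := by
  rw [h]
  constructor
  · exact fun hvw => ⟨v, w, hvw, by simp, by simp⟩
  · rintro ⟨x, y, hxy, hx, hy⟩
    simp only [decide_eq_true_eq] at hx hy
    rcases hx with rfl | rfl <;> rcases hy with rfl | rfl
    exacts [absurd hxy G.irrefl, hxy, hxy.symm, absurd hxy G.irrefl]

theorem Represents.unique {φ : MFormula V} {G H : SimpleGraph V}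
    (hG : φ.Represents G) (hH : φ.Represents H) : G = H := by
  classical
  ext v w
  rw [hG.adj_iff, hH.adj_iff]

theorem card_le_of_forall_represents [Fintype V] {s : ℕ} (S : Set (SimpleGraph V))
    (hS : ∀ G ∈ S, ∃ φ : MFormula V, φ.size ≤ s ∧ φ.Represents G) :
    Nat.card S ≤ (Fintype.card V + 3) ^ s := by
  choose φ hφs hφ using hS
  have hinj : Function.Injective
      (fun G : S => (⟨φ G G.2, hφs G G.2⟩ : {φ : MFormula V | φ.size ≤ s})) :=
    fun G H h => Subtype.ext <| (hφ G G.2).unique <| by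
      have hGH : φ G G.2 = φ H H.2 := congrArg Subtype.val h
      exact hGH ▸ hφ H H.2
  exact (Nat.card_le_card_of_injective _ hinj).trans (card_size_le V s)

end MFormula

namespace SimpleGraph

variable {α β : Type*}

def bipartiteOf (r : α → β → Prop) : SimpleGraph (α ⊕ β) where
  Adj
    | .inl a, .inr b => r a b
    | .inr b, .inl a => r a b
    | _, _ => False
  symm := ⟨by rintro (a | b) (a' | b') h <;> exact h⟩
  loopless := ⟨by rintro (a | b) h <;> exact h⟩

theorem bipartiteOf_le_completeBipartiteGraph (r : α → β → Prop) :
    bipartiteOf r ≤ completeBipartiteGraph α β := by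
  rintro (a | b) (a' | b') h <;> simp_all [bipartiteOf]

theorem bipartiteOf_cliqueFree_three (r : α → β → Prop) : (bipartiteOf r).CliqueFree 3 :=
  ((CompleteBipartiteGraph.bicoloring α β).colorable.mono_left
    (bipartiteOf_le_completeBipartiteGraph r)).cliqueFree (by simp)

theorem bipartiteOf_injective : Function.Injective (bipartiteOf (α := α) (β := β)) :=
  fun _ _ h => funext₂ fun a b => propext (iff_of_eq (congrArg (·.Adj (.inl a) (.inr b)) h))

end SimpleGraph

theorem two_pow_sq_le_Q (n : ℕ) : 2 ^ (n ^ 2) ≤ Q n := by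
  have hinj : Function.Injective (fun r : Fin n → Fin n → Prop =>
      (⟨_, SimpleGraph.bipartiteOf_cliqueFree_three r⟩ :
        {G : SimpleGraph (Fin n ⊕ Fin n) | G.CliqueFree 3})) :=
    fun _ _ h => SimpleGraph.bipartiteOf_injective (congrArg Subtype.val h)
  calc 2 ^ (n ^ 2) = Nat.card (Fin n → Fin n → Prop) := by
        simp [Nat.card_eq_fintype_card, pow_mul, sq]
    _ ≤ Q n := Nat.card_le_card_of_injective _ hinj

theorem two_rpow_sq_le_Q (n : ℕ) : (2 : ℝ) ^ ((n : ℝ) ^ 2) ≤ Q n := by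
  rw [← Nat.cast_pow, Real.rpow_natCast]
  exact_mod_cast two_pow_sq_le_Q n

theorem pow_eq_rpow_mul_logb {b x : ℝ} (hb : 0 < b) (hb₁ : b ≠ 1) (hx : 0 < x) (k : ℕ) :
    x ^ k = b ^ (k * Real.logb b x) := by
  rw [mul_comm, Real.rpow_mul hb.le, Real.rpow_logb hb hb₁ hx, Real.rpow_natCast]

theorem two_mul_add_three_le_pow_three {x : ℝ} (hx : 2 ≤ x) : 2 * x + 3 ≤ x ^ 3 := by
  nlinarith [mul_nonneg (sub_nonneg.2 hx) (by positivity : 0 ≤ x ^ 2 + 2 * x + 2)]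

theorem card_size_le_two_rpow {n : ℕ} (hn : 2 ≤ n) (s : ℕ) :
    (Nat.card {φ : MFormula (Fin n) | φ.size ≤ s} : ℝ) ≤ 2 ^ (3 * s * Real.logb 2 n) := by
  have hn' : (2 : ℝ) ≤ n := by exact_mod_cast hn
  have hbase : (n : ℝ) + 3 ≤ (n : ℝ) ^ 3 := by linarith [two_mul_add_three_le_pow_three hn']
  calc (Nat.card {φ : MFormula (Fin n) | φ.size ≤ s} : ℝ)
      ≤ ((n : ℝ) + 3) ^ s := by exact_mod_cast (MFormula.card_size_le (Fin n) s).trans (by simp)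
    _ ≤ ((n : ℝ) ^ 3) ^ s := by gcongr
    _ = 2 ^ (3 * s * Real.logb 2 n) := by
      rw [← pow_mul, pow_eq_rpow_mul_logb two_pos (by norm_num) (by positivity)]
      push_cast
      ring_nf

def smallFormulaGraphs (c : ℝ) (n : ℕ) : Set (SimpleGraph (Fin n ⊕ Fin n)) :=
  {G | G.CliqueFree 3 ∧ ∃ φ : MFormula (Fin n ⊕ Fin n),
    (φ.size : ℝ) ≤ c * n ^ 2 / Real.logb 2 n ∧ φ.Represents G}

theorem card_smallFormulaGraphs_le {c : ℝ} (hc : 0 ≤ c) {n : ℕ} (hn : 2 ≤ n) :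
    (Nat.card (smallFormulaGraphs c n) : ℝ) ≤ 2 ^ (3 * c * n ^ 2) := by
  have hn' : (2 : ℝ) ≤ n := by exact_mod_cast hn
  have hL : 0 < Real.logb 2 n := Real.logb_pos one_lt_two (by linarith)
  set s := ⌊c * n ^ 2 / Real.logb 2 n⌋₊
  have hs : (s : ℝ) * Real.logb 2 n ≤ c * n ^ 2 :=
    (le_div_iff₀ hL).mp (Nat.floor_le (by positivity))
  have hcount : Nat.card (smallFormulaGraphs c n) ≤ (2 * n + 3) ^ s := by
    simpa [two_mul] using MFormula.card_le_of_forall_represents (s := s) (smallFormulaGraphs c n)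
      fun G ⟨_, φ, hφ, hG⟩ => ⟨φ, Nat.le_floor hφ, hG⟩
  have hbase := two_mul_add_three_le_pow_three hn'
  calc (Nat.card (smallFormulaGraphs c n) : ℝ)
      ≤ (2 * (n : ℝ) + 3) ^ s := by exact_mod_cast hcount
    _ ≤ ((n : ℝ) ^ 3) ^ s := by gcongr
    _ = 2 ^ (3 * (s * Real.logb 2 n)) := by
      rw [← pow_mul, pow_eq_rpow_mul_logb two_pos (by norm_num) (by positivity)]
      push_cast
      ring_nf
    _ ≤ 2 ^ (3 * c * n ^ 2) := Real.rpow_le_rpow_of_exponent_le one_le_two (by linarith)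

theorem tendsto_card_smallFormulaGraphs_div_Q {c : ℝ} (hc₀ : 0 ≤ c) (hc : c < 1 / 3) :
    Tendsto (fun n => (Nat.card (smallFormulaGraphs c n) : ℝ) / Q n) atTop (𝓝 0) := by
  have hexp : Tendsto (fun n : ℕ => (3 * c - 1) * (n : ℝ) ^ 2) atTop atBot :=
    ((tendsto_pow_atTop two_ne_zero).comp tendsto_natCast_atTop_atTop).const_mul_atTop_of_neg
      (by linarith)
  refine squeeze_zero' (Eventually.of_forall fun n => by positivity) ?_
    ((tendsto_rpow_atBot_of_base_gt_one 2 one_lt_two).comp hexp)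
  filter_upwards [eventually_ge_atTop 2] with n hn
  calc (Nat.card (smallFormulaGraphs c n) : ℝ) / Q n
      ≤ 2 ^ (3 * c * n ^ 2) / 2 ^ ((n : ℝ) ^ 2) :=
        div_le_div₀ (by positivity) (card_smallFormulaGraphs_le hc₀ hn) (by positivity)
          (two_rpow_sq_le_Q n)
    _ = 2 ^ ((3 * c - 1) * (n : ℝ) ^ 2) := by
      rw [← Real.rpow_sub two_pos]
      ring_nf

/-- Almost all monotone quadratic Boolean functions need large formulas:
`log Q_n ≥ c₁ n²`; the number of `n`-variable monotone formulas of size at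
most `s` is at most `2^(c₂ s log n)` for `n ≥ 2`; consequently the proportion
of monotone quadratic functions (triangle-free graphs) expressible by
formulas of size at most `c·n²/log n` tends to `0`. -/
theorem almost_all_quadratic_large :
    ∃ c₁ c₂ : ℝ, 0 < c₁ ∧ 0 < c₂ ∧
      (∀ n : ℕ, c₁ * n ^ 2 ≤ Real.logb 2 (Q n)) ∧
      (∀ n s : ℕ, 2 ≤ n →
        (Nat.card {φ : MFormula (Fin n) | φ.size ≤ s} : ℝ) ≤
          2 ^ (c₂ * s * Real.logb 2 n)) ∧
      (∃ c : ℝ, 0 < c ∧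
        Filter.Tendsto
          (fun n : ℕ =>
            (Nat.card {G : SimpleGraph (Fin n ⊕ Fin n) |
              G.CliqueFree 3 ∧
              ∃ φ : MFormula (Fin n ⊕ Fin n),
                (φ.size : ℝ) ≤ c * n ^ 2 / Real.logb 2 n ∧
                ∀ a : Fin n ⊕ Fin n → Bool, φ.eval a = true ↔
                  ∃ v w, G.Adj v w ∧ a v = true ∧ a w = true} : ℝ) / Q n)
          Filter.atTop (nhds 0)) := by
  refine ⟨1, 3, one_pos, three_pos, fun n => ?_, fun n s hn => card_size_le_two_rpow hn s,
    1 / 8, by norm_num, tendsto_card_smallFormulaGraphs_div_Q (by norm_num) (by norm_num)⟩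
  have hQ := two_rpow_sq_le_Q n
  rw [one_mul, Real.le_logb_iff_rpow_le one_lt_two ((Real.rpow_pos_of_pos two_pos _).trans_le hQ)]
  exact hQ
end
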